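/- Let S be a graded F-algebra concentrated in even degrees and n ≥ 1, and let R = S ⊗ F[u]/(u^{n+1}) with the truncated-product map ψ_A. Then ψ_A is graded symmetric of degree −2(n+1) and satisfies: (1) x·ψ_A(y, z) − ψ_A(xy, z) + ψ_A(x, yz) − ψ_A(x, y)·z = 0 for all x, y, z ∈ R; (2) ψ_A(1, x) = 0 for all x ∈ R; and (3) ψ_A(w, x) = 0 for all x ∈ R whenever w ∈ R² lies in S² ⊗ 1 (i.e. whenever the coefficient of 1 ⊗ u in w vanishes). -/

import Mathlib

/-- A finite-dimensional graded-commutative ℤ-graded `F`-algebra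
("graded F-algebra" in the sense of Seidel's paper). -/
structure GradedFAlg (F : Type) [Field F] where
  carrier : Type
  [ring : Ring carrier]
  [alg : Algebra F carrier]
  grading : ℤ → Submodule F carrier
  [gradedAlgebra : GradedAlgebra grading]
  [findim : FiniteDimensional F carrier]
  gcomm : ∀ (i j : ℤ) (x y : carrier), x ∈ grading i → y ∈ grading j →
    x * y = ((-1 : F) ^ (i * j)) • (y * x)

attribute [instance] GradedFAlg.ring GradedFAlg.alg GradedFAlg.gradedAlgebra GradedFAlg.findim

variable {F : Type} [Field F]

/-- A homomorphism of graded `F`-algebras. -/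
structure GradedFAlg.Hom (A B : GradedFAlg F) where
  toAlgHom : A.carrier →ₐ[F] B.carrier
  graded : ∀ (i : ℤ) (x : A.carrier), x ∈ A.grading i → toAlgHom x ∈ B.grading i

/-- The identity homomorphism of graded `F`-algebras. -/
def GradedFAlg.Hom.id (A : GradedFAlg F) : GradedFAlg.Hom A A :=
  ⟨AlgHom.id F A.carrier, fun _ _ h => h⟩

/-- A `d`-dimensional (first order infinitesimal) deformation `(R̃, t, j)` of `A`:
`t ∈ R̃^d` with `t² = 0` whose annihilator is exactly `t·R̃`, and `j : R̃ → A`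
a surjective homomorphism of graded algebras with kernel `t·R̃`. -/
structure Deformation (F : Type) [Field F] (A : GradedFAlg F) (d : ℤ) where
  alg : GradedFAlg F
  t : alg.carrier
  t_mem : t ∈ alg.grading d
  t_sq : t * t = 0
  t_ann : ∀ x : alg.carrier, t * x = 0 ↔ ∃ y : alg.carrier, x = t * y
  j : GradedFAlg.Hom alg A
  j_surj : Function.Surjective j.toAlgHom
  j_ker : ∀ x : alg.carrier, j.toAlgHom x = 0 ↔ ∃ y : alg.carrier, x = t * y

/-- A morphism of deformations over a homomorphism `f` of graded `F`-algebras. -/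
structure DefMorphismOver {A B : GradedFAlg F} (f : GradedFAlg.Hom A B) {d : ℤ}
    (D1 : Deformation F A d) (D2 : Deformation F B d) where
  toHom : GradedFAlg.Hom D1.alg D2.alg
  map_t : toHom.toAlgHom D1.t = D2.t
  over' : ∀ x, D2.j.toAlgHom (toHom.toAlgHom x) = f.toAlgHom (D1.j.toAlgHom x)

/-- Two deformations of `A` are isomorphic if there is a bijective morphism of
deformations (i.e. a morphism over the identity of `A`) between them. -/
def Deformation.Iso {A : GradedFAlg F} {d : ℤ} (D1 D2 : Deformation F A d) : Prop :=
  ∃ φ : DefMorphismOver (GradedFAlg.Hom.id A) D1 D2, Function.Bijective φ.toHom.toAlgHom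

/-- `R` is (a model of) the graded tensor product `S ⊗ F[u]/(u^{n+1})` with
`deg u = 2`: `ι : S → R` is a homomorphism of graded algebras, `u^{n+1} = 0`,
and the map `(s₀, …, s_n) ↦ Σᵢ ι(sᵢ)·uⁱ` is a linear bijection `S^{n+1} ≅ R`. -/
structure IsTensorCPn (S R : GradedFAlg F) (n : ℕ) (ι : GradedFAlg.Hom S R)
    (u : R.carrier) : Prop where
  u_mem : u ∈ R.grading 2
  u_pow : u ^ (n + 1) = 0
  free : Function.Bijective (fun c : Fin (n + 1) → S.carrier =>
    ∑ i : Fin (n + 1), ι.toAlgHom (c i) * u ^ (i : ℕ))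

/-- The bilinear map `ψ_A` on `R = S ⊗ F[u]/(u^{n+1})` is the truncated product:
`ψ_A(x ⊗ uⁱ, y ⊗ uʲ) = xy ⊗ u^{i+j−n−1}` if `i + j ≥ n + 1` and `= 0` otherwise. -/
def IsTruncatedProduct (S R : GradedFAlg F) (n : ℕ) (ι : GradedFAlg.Hom S R)
    (u : R.carrier) (ψA : R.carrier →ₗ[F] R.carrier →ₗ[F] R.carrier) : Prop :=
  ∀ (x y : S.carrier) (i j : ℕ), i ≤ n → j ≤ n →
    ψA (ι.toAlgHom x * u ^ i) (ι.toAlgHom y * u ^ j) =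
      if n + 1 ≤ i + j then ι.toAlgHom (x * y) * u ^ (i + j - (n + 1)) else 0

/-! On the monomials `ι s * u ^ i` (`i ≤ n`), which span `R`, `ψ_A` multiplies the coefficients
and lowers the `u`-exponent by `n + 1` (or vanishes); every claim is (multi)linear, so it reduces
to monomials. Symmetry holds because `S`, living in even degrees, is commutative; the sign is
harmless because a homogeneous element of degree `d` is a combination of monomials with
`s ∈ S^{d - 2i}`, so `R` vanishes in odd degrees too. In the cocycle identity for
`(a uⁱ, b uʲ, c uᵏ)` every term is `0` or `abc · u^{i+j+k-n-1}`. -/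

theorem DirectSum.decompose_mem_span_of_mem_span_iUnion {ι R M : Type*} [DecidableEq ι]
    [Semiring R] [AddCommMonoid M] [Module R M] (ℳ : ι → Submodule R M)
    [DirectSum.Decomposition ℳ] {G : ι → Set M} (hG : ∀ i, G i ⊆ ℳ i) {x : M}
    (hx : x ∈ Submodule.span R (⋃ i, G i)) (i : ι) :
    (DirectSum.decompose ℳ x i : M) ∈ Submodule.span R (G i) := by
  induction hx using Submodule.span_induction with
  | mem y hy =>
    obtain ⟨j, hj⟩ := Set.mem_iUnion.1 hy
    by_cases hji : j = i
    · subst hji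
      rw [DirectSum.decompose_of_mem_same ℳ (hG j hj)]
      exact Submodule.subset_span hj
    · rw [DirectSum.decompose_of_mem_ne ℳ (hG j hj) hji]
      exact zero_mem _
  | zero => simp
  | add y z _ _ hy hz =>
    rw [DirectSum.decompose_add, DirectSum.add_apply, Submodule.coe_add]
    exact add_mem hy hz
  | smul r y _ hy =>
    rw [DirectSum.decompose_smul, DirectSum.smul_apply, Submodule.coe_smul]
    exact Submodule.smul_mem _ r hy

theorem LinearMap.ext_on₂ {R M N P : Type*} [CommSemiring R] [AddCommMonoid M] [Module R M]
    [AddCommMonoid N] [Module R N] [AddCommMonoid P] [Module R P]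
    {f g : M →ₗ[R] N →ₗ[R] P} {s : Set M} {t : Set N}
    (hs : Submodule.span R s = ⊤) (ht : Submodule.span R t = ⊤)
    (h : ∀ x ∈ s, ∀ y ∈ t, f x y = g x y) : f = g :=
  LinearMap.ext_on hs fun x hx => LinearMap.ext_on ht fun y hy => h x hx y hy

theorem LinearMap.ext_on₃ {R M N P Q : Type*} [CommSemiring R] [AddCommMonoid M] [Module R M]
    [AddCommMonoid N] [Module R N] [AddCommMonoid P] [Module R P] [AddCommMonoid Q] [Module R Q]
    {f g : M →ₗ[R] N →ₗ[R] P →ₗ[R] Q} {s : Set M} {t : Set N} {r : Set P}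
    (hs : Submodule.span R s = ⊤) (ht : Submodule.span R t = ⊤) (hr : Submodule.span R r = ⊤)
    (h : ∀ x ∈ s, ∀ y ∈ t, ∀ z ∈ r, f x y z = g x y z) : f = g :=
  LinearMap.ext_on hs fun x hx => LinearMap.ext_on₂ ht hr (h x hx)

namespace GradedFAlg

theorem commute_of_mem_even (A : GradedFAlg F) {i : ℤ} (hi : Even i) {x : A.carrier}
    (hx : x ∈ A.grading i) (r : A.carrier) : Commute x r := by
  induction r using DirectSum.Decomposition.inductionOn A.grading with
  | zero => exact Commute.zero_right x
  | @homogeneous j y =>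
    obtain ⟨y, hy⟩ := y
    rw [Commute, SemiconjBy, A.gcomm i j x y hx hy, Even.neg_one_zpow (hi.mul_right j), one_smul]
  | add y z hy hz => exact hy.add_right hz

theorem mul_comm_of_odd_eq_bot (A : GradedFAlg F) (hA : ∀ i : ℤ, Odd i → A.grading i = ⊥)
    (a b : A.carrier) : a * b = b * a := by
  induction a using DirectSum.Decomposition.inductionOn A.grading with
  | zero => simp
  | @homogeneous i x =>
    obtain ⟨x, hx⟩ := x
    rcases Int.even_or_odd i with hi | hi
    · exact A.commute_of_mem_even hi hx b
    · rw [hA i hi, Submodule.mem_bot] at hx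
      simp [hx]
  | add x y hx hy => rw [add_mul, mul_add, hx, hy]

end GradedFAlg

def monomialsOfDegree {S R : GradedFAlg F} (ι : GradedFAlg.Hom S R)
    (u : R.carrier) (n : ℕ) (d : ℤ) : Set R.carrier :=
  {x | ∃ s, ∃ i ≤ n, s ∈ S.grading (d - 2 * i) ∧ ι.toAlgHom s * u ^ i = x}

namespace IsTensorCPn

variable {S R : GradedFAlg F} {n : ℕ} {ι : GradedFAlg.Hom S R} {u : R.carrier}

theorem commute_pow (hT : IsTensorCPn S R n ι u) (i : ℕ) (r : R.carrier) : Commute (u ^ i) r :=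
  (R.commute_of_mem_even even_two hT.u_mem r).pow_left i

theorem monomial_mul_monomial (hT : IsTensorCPn S R n ι u) (s t : S.carrier) (i j : ℕ) :
    ι.toAlgHom s * u ^ i * (ι.toAlgHom t * u ^ j) = ι.toAlgHom (s * t) * u ^ (i + j) := by
  rw [mul_assoc, ← mul_assoc (u ^ i), (hT.commute_pow i _).eq, map_mul, pow_add]
  simp only [mul_assoc]

theorem span_monomials (hT : IsTensorCPn S R n ι u) :
    Submodule.span F {x | ∃ s, ∃ i ≤ n, ι.toAlgHom s * u ^ i = x} = ⊤ := by
  refine eq_top_iff.2 fun x _ => ?_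
  obtain ⟨c, rfl⟩ := hT.free.surjective x
  exact Submodule.sum_mem _ fun i _ => Submodule.subset_span ⟨c i, i, Nat.lt_succ_iff.1 i.2, rfl⟩

theorem monomialsOfDegree_subset (hT : IsTensorCPn S R n ι u) (d : ℤ) :
    monomialsOfDegree ι u n d ⊆ R.grading d := by
  rintro _ ⟨s, i, -, hs, rfl⟩
  rw [SetLike.mem_coe]
  convert SetLike.mul_mem_graded (ι.graded _ s hs) (SetLike.pow_mem_graded i hT.u_mem) using 2
  rw [nsmul_eq_mul]
  ring

theorem span_iUnion_monomialsOfDegree (hT : IsTensorCPn S R n ι u) :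
    Submodule.span F (⋃ d, monomialsOfDegree ι u n d) = ⊤ := by
  rw [eq_top_iff, ← hT.span_monomials, Submodule.span_le]
  rintro _ ⟨s, i, hi, rfl⟩
  induction s using DirectSum.Decomposition.inductionOn S.grading with
  | zero => simp
  | @homogeneous k s =>
    exact Submodule.subset_span (Set.mem_iUnion.2 ⟨k + 2 * i, s, i, hi, by simp, rfl⟩)
  | add s t hs ht =>
    rw [map_add, add_mul]
    exact add_mem hs ht

theorem mem_span_monomialsOfDegree (hT : IsTensorCPn S R n ι u) {d : ℤ} {x : R.carrier}
    (hx : x ∈ R.grading d) : x ∈ Submodule.span F (monomialsOfDegree ι u n d) := by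
  classical
  rw [← DirectSum.decompose_of_mem_same R.grading hx]
  exact DirectSum.decompose_mem_span_of_mem_span_iUnion R.grading hT.monomialsOfDegree_subset
    (hT.span_iUnion_monomialsOfDegree ▸ Submodule.mem_top) d

theorem eq_zero_of_mem_odd (hT : IsTensorCPn S R n ι u) (hS : ∀ i : ℤ, Odd i → S.grading i = ⊥)
    {d : ℤ} (hd : Odd d) {x : R.carrier} (hx : x ∈ R.grading d) : x = 0 := by
  have : Submodule.span F (monomialsOfDegree ι u n d) = ⊥ := by
    rw [Submodule.span_eq_bot]
    rintro _ ⟨s, i, -, hs, rfl⟩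
    rw [hS _ (hd.sub_even (even_two_mul _)), Submodule.mem_bot] at hs
    simp [hs]
  exact (Submodule.mem_bot F).1 (this ▸ hT.mem_span_monomialsOfDegree hx)

end IsTensorCPn

namespace IsTruncatedProduct

variable {S R : GradedFAlg F} {n : ℕ} {ι : GradedFAlg.Hom S R}
  {u : R.carrier} {ψ : R.carrier →ₗ[F] R.carrier →ₗ[F] R.carrier}

theorem flip_eq (hT : IsTensorCPn S R n ι u) (hψ : IsTruncatedProduct S R n ι u ψ)
    (hS : ∀ i : ℤ, Odd i → S.grading i = ⊥) : ψ.flip = ψ := by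
  refine LinearMap.ext_on₂ hT.span_monomials hT.span_monomials ?_
  rintro _ ⟨s, i, hi, rfl⟩ _ ⟨t, j, hj, rfl⟩
  rw [LinearMap.flip_apply, hψ t s j i hj hi, hψ s t i j hi hj, S.mul_comm_of_odd_eq_bot hS,
    Nat.add_comm j i]

theorem apply_mem_grading (hT : IsTensorCPn S R n ι u) (hψ : IsTruncatedProduct S R n ι u ψ)
    {d e : ℤ} {x y : R.carrier} (hx : x ∈ R.grading d) (hy : y ∈ R.grading e) :
    ψ x y ∈ R.grading (d + e - 2 * ((n : ℤ) + 1)) := by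
  suffices Submodule.map₂ ψ (Submodule.span F (monomialsOfDegree ι u n d))
      (Submodule.span F (monomialsOfDegree ι u n e)) ≤ R.grading (d + e - 2 * ((n : ℤ) + 1)) from
    Submodule.map₂_le.1 this x (hT.mem_span_monomialsOfDegree hx) y
      (hT.mem_span_monomialsOfDegree hy)
  rw [Submodule.map₂_span_span, Submodule.span_le]
  rintro _ ⟨_, ⟨s, i, hi, hs, rfl⟩, _, ⟨t, j, hj, ht, rfl⟩, rfl⟩
  simp only [SetLike.mem_coe]
  rw [hψ s t i j hi hj]
  split_ifs with hij
  · convert SetLike.mul_mem_graded (ι.graded _ _ (SetLike.mul_mem_graded hs ht))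
      (SetLike.pow_mem_graded (i + j - (n + 1)) hT.u_mem) using 2
    rw [nsmul_eq_mul]
    push_cast [hij]
    ring
  · exact zero_mem _

theorem mul_apply_add_apply_mul_monomial (hT : IsTensorCPn S R n ι u)
    (hψ : IsTruncatedProduct S R n ι u ψ)
    (a b c : S.carrier) {i j k : ℕ} (hi : i ≤ n) (hj : j ≤ n) (hk : k ≤ n) :
    ι.toAlgHom a * u ^ i * ψ (ι.toAlgHom b * u ^ j) (ι.toAlgHom c * u ^ k)
      + ψ (ι.toAlgHom a * u ^ i) (ι.toAlgHom b * u ^ j * (ι.toAlgHom c * u ^ k))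
      = ψ (ι.toAlgHom a * u ^ i * (ι.toAlgHom b * u ^ j)) (ι.toAlgHom c * u ^ k)
        + ψ (ι.toAlgHom a * u ^ i) (ι.toAlgHom b * u ^ j) * (ι.toAlgHom c * u ^ k) := by
  have hu : ∀ m, n + 1 ≤ m → u ^ m = 0 := fun m hm => pow_eq_zero_of_le hm hT.u_pow
  set M := ι.toAlgHom (a * b * c) * u ^ (i + j + k - (n + 1))
  have h₁ : ι.toAlgHom a * u ^ i * ψ (ι.toAlgHom b * u ^ j) (ι.toAlgHom c * u ^ k) =
      if n + 1 ≤ j + k then M else 0 := by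
    rw [hψ b c j k hj hk]
    split_ifs with h
    · rw [hT.monomial_mul_monomial, ← mul_assoc, ← Nat.add_sub_assoc h, ← add_assoc]
    · rw [mul_zero]
  have h₂ : ψ (ι.toAlgHom a * u ^ i) (ι.toAlgHom b * u ^ j * (ι.toAlgHom c * u ^ k)) =
      if j + k ≤ n ∧ n + 1 ≤ i + j + k then M else 0 := by
    rw [hT.monomial_mul_monomial]
    by_cases hjk : j + k ≤ n
    · simp only [hψ _ _ _ _ hi hjk, hjk, true_and, M, mul_assoc, add_assoc]
    · simp [hjk, hu (j + k) (by omega)]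
  have h₃ : ψ (ι.toAlgHom a * u ^ i * (ι.toAlgHom b * u ^ j)) (ι.toAlgHom c * u ^ k) =
      if i + j ≤ n ∧ n + 1 ≤ i + j + k then M else 0 := by
    rw [hT.monomial_mul_monomial]
    by_cases hij : i + j ≤ n
    · simp only [hψ _ _ _ _ hij hk, hij, true_and, M]
    · simp [hij, hu (i + j) (by omega)]
  have h₄ : ψ (ι.toAlgHom a * u ^ i) (ι.toAlgHom b * u ^ j) * (ι.toAlgHom c * u ^ k) =
      if n + 1 ≤ i + j then M else 0 := by
    rw [hψ a b i j hi hj]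
    split_ifs with h
    · rw [hT.monomial_mul_monomial, ← Nat.sub_add_comm h]
    · rw [zero_mul]
  rw [h₁, h₂, h₃, h₄]
  -- both sides are `M` exactly when `n < i + j + k`
  split_ifs <;> first | (exfalso; omega) | simp

open LinearMap in
theorem mul_apply_add_apply_mul (hT : IsTensorCPn S R n ι u)
    (hψ : IsTruncatedProduct S R n ι u ψ) (x y z : R.carrier) :
    x * ψ y z + ψ x (y * z) = ψ (x * y) z + ψ x y * z := by
  -- the two sides as trilinear maps
  have h : (llcomp F _ _ _).compl₁₂ (mul F _) ψ + (llcomp F _ _ _).compl₁₂ ψ (mul F _)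
      = (mul F _).compr₂ ψ + ψ.compr₂ (mul F _) := by
    refine ext_on₃ hT.span_monomials hT.span_monomials hT.span_monomials ?_
    rintro _ ⟨a, i, hi, rfl⟩ _ ⟨b, j, hj, rfl⟩ _ ⟨c, k, hk, rfl⟩
    exact hψ.mul_apply_add_apply_mul_monomial hT a b c hi hj hk
  exact congr($h x y z)

theorem apply_ι_eq_zero (hT : IsTensorCPn S R n ι u)
    (hψ : IsTruncatedProduct S R n ι u ψ) (s : S.carrier) : ψ (ι.toAlgHom s) = 0 := by
  refine LinearMap.ext_on hT.span_monomials ?_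
  rintro _ ⟨t, j, hj, rfl⟩
  rw [← mul_one (ι.toAlgHom s), ← pow_zero u, hψ s t 0 j (Nat.zero_le n) hj, if_neg (by omega),
    LinearMap.zero_apply]

end IsTruncatedProduct

theorem truncated_product_properties_general
    {F : Type} [Field F] (S R : GradedFAlg F)
    (hSeven : ∀ i : ℤ, Odd i → S.grading i = ⊥)
    (n : ℕ) (ι : GradedFAlg.Hom S R) (u : R.carrier)
    (hT : IsTensorCPn S R n ι u)
    (ψA : R.carrier →ₗ[F] R.carrier →ₗ[F] R.carrier)
    (hψA : IsTruncatedProduct S R n ι u ψA) :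
    (∀ (i j : ℤ) (x y : R.carrier), x ∈ R.grading i → y ∈ R.grading j →
      ψA x y ∈ R.grading (i + j - 2 * ((n : ℤ) + 1))) ∧
    (∀ (i j : ℤ) (x y : R.carrier), x ∈ R.grading i → y ∈ R.grading j →
      ψA x y = ((-1 : F) ^ (i * j)) • ψA y x) ∧
    (∀ x y z : R.carrier, x * ψA y z - ψA (x * y) z + ψA x (y * z) - ψA x y * z = 0) ∧
    (∀ x : R.carrier, ψA 1 x = 0) ∧
    (∀ w : R.carrier, w ∈ R.grading 2 →
      (∃ s : S.carrier, s ∈ S.grading 2 ∧ w = ι.toAlgHom s) →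
      ∀ x : R.carrier, ψA w x = 0) := by
  refine ⟨fun i j x y hx hy => hψA.apply_mem_grading hT hx hy, ?_, ?_, ?_, ?_⟩
  · intro i j x y hx hy
    rcases Int.even_or_odd i with hi | hi
    · rcases Int.even_or_odd j with hj | hj
      · rw [Even.neg_one_zpow (hi.mul_right j), one_smul, ← LinearMap.flip_apply ψA,
          hψA.flip_eq hT hSeven]
      · simp [hT.eq_zero_of_mem_odd hSeven hj hy]
    · simp [hT.eq_zero_of_mem_odd hSeven hi hx]
  · intro x y z
    rw [sub_add_eq_add_sub, sub_sub, sub_eq_zero, hψA.mul_apply_add_apply_mul hT]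
  · intro x
    rw [← map_one ι.toAlgHom, hψA.apply_ι_eq_zero hT, LinearMap.zero_apply]
  · rintro w - ⟨s, -, rfl⟩ x
    rw [hψA.apply_ι_eq_zero hT, LinearMap.zero_apply]

/-- Let `S` be a graded `F`-algebra concentrated in even
degrees, `n ≥ 1`, and `R = S ⊗ F[u]/(u^{n+1})` with the truncated-product map
`ψ_A`. Then `ψ_A` is graded symmetric of degree `−2(n+1)` and satisfies:
(1) `x·ψ_A(y,z) − ψ_A(xy,z) + ψ_A(x,yz) − ψ_A(x,y)·z = 0`;
(2) `ψ_A(1,x) = 0`; and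
(3) `ψ_A(w,x) = 0` whenever `w ∈ R²` lies in `S² ⊗ 1`. -/
theorem truncated_product_properties
    {F : Type} [Field F] (S R : GradedFAlg F)
    (hSeven : ∀ i : ℤ, Odd i → S.grading i = ⊥)
    (n : ℕ) (hn : 1 ≤ n) (ι : GradedFAlg.Hom S R) (u : R.carrier)
    (hT : IsTensorCPn S R n ι u)
    (ψA : R.carrier →ₗ[F] R.carrier →ₗ[F] R.carrier)
    (hψA : IsTruncatedProduct S R n ι u ψA) :
    (∀ (i j : ℤ) (x y : R.carrier), x ∈ R.grading i → y ∈ R.grading j →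
      ψA x y ∈ R.grading (i + j - 2 * ((n : ℤ) + 1))) ∧
    (∀ (i j : ℤ) (x y : R.carrier), x ∈ R.grading i → y ∈ R.grading j →
      ψA x y = ((-1 : F) ^ (i * j)) • ψA y x) ∧
    (∀ x y z : R.carrier, x * ψA y z - ψA (x * y) z + ψA x (y * z) - ψA x y * z = 0) ∧
    (∀ x : R.carrier, ψA 1 x = 0) ∧
    (∀ w : R.carrier, w ∈ R.grading 2 →
      (∃ s : S.carrier, s ∈ S.grading 2 ∧ w = ι.toAlgHom s) →
      ∀ x : R.carrier, ψA w x = 0) :=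
  truncated_product_properties_general S R hSeven n ι u hT ψA hψA
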